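/- arXiv:1602.00413 — 5 statements merged into one kernel-verified Lean document; each statement's English description precedes it below -/
import Mathlib

section
/- Let V ⊆ (ℤ/2)^{2n} be a subgroup (viewing Pauli elements as binary vectors) generated by 2c symplectic-pair generators g₁,h₁,…,g_c,h_c all of even weight and r isotropic generators g_{c+1},…,g_{c+r} all of even weight, satisfying the standard commutation relations (⟨g_i,g_j⟩=0, ⟨h_i,h_j⟩=0, ⟨g_i,h_j⟩=0 for i≠j, ⟨g_i,h_i⟩=1), and suppose all 2c+r generators are independent. Then the number of elements of V of even weight equals 2^{r-1}(4^c + 2^c) and the number of elements of odd weight equals 2^{r-1}(4^c - 2^c), provided r ≥ 1 or (with the convention 2^{-1}(4^c+2^c) interpreted for r=0 as (4^c+2^c)/2). -/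
open Finset

/-- An `n`-qubit Pauli operator modulo phase, identified with `(u, v) ∈ (ℤ/2)ⁿ × (ℤ/2)ⁿ`
(corresponding to `Z^u X^v`). -/
abbrev Pauli (n : ℕ) := (Fin n → ZMod 2) × (Fin n → ZMod 2)

/-- The weight of a Pauli operator: the number of qubits on which it acts nontrivially. -/
def wtP {n : ℕ} (g : Pauli n) : ℕ :=
  (Finset.univ.filter fun i => g.1 i ≠ 0 ∨ g.2 i ≠ 0).card

/-- The symplectic inner product of two Pauli operators. -/
def sip {n : ℕ} (g h : Pauli n) : ZMod 2 :=
  ∑ i, (g.1 i * h.2 i + g.2 i * h.1 i)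

/-!
Reduced mod 2, the weight is a quadratic form on `(ℤ/2)^{2n}` whose polar form is `sip`.
By independence, the coefficient vectors `(a, b) ∈ (ℤ/2)^{c+r} × (ℤ/2)^c` parametrise `V`
bijectively, and since the generators are even and the only nonzero pairings among them are
`⟨g_j, h_j⟩ = 1`, the weight parity of `∑ aᵢ gᵢ + ∑ bⱼ hⱼ` is `∑_{j<c} a_j b_j`.
For fixed `b ≠ 0` this is a nonzero functional of `a`, vanishing on exactly half of the `2^{c+r}`
values of `a`, while for `b = 0` it vanishes everywhere. Hence twice the number of even elements
is `2^{c+r} (2^c - 1) + 2 · 2^{c+r} = 2^r (4^c + 2^c)`, and the odd ones make up the rest of `V`.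
-/

theorem AddMonoidHom.two_mul_card_ker {A : Type*} [AddGroup A] (f : A →+ ZMod 2) (hf : f ≠ 0) :
    2 * Nat.card f.ker = Nat.card A := by
  have ne_zero_iff : ∀ t : ZMod 2, t ≠ 0 ↔ t = 1 := by decide
  obtain ⟨a, ha⟩ : ∃ a, f a ≠ 0 := by
    by_contra! h
    exact hf (AddMonoidHom.ext h)
  have hsurj : Function.Surjective f := by
    intro y
    by_cases hy : y = 0
    · exact ⟨0, by rw [map_zero, hy]⟩
    · exact ⟨a, by rw [(ne_zero_iff _).1 ha, (ne_zero_iff _).1 hy]⟩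
  rw [← f.ker.card_mul_index, AddSubgroup.index_ker, f.range_eq_top.2 hsurj,
    AddSubgroup.card_top, Nat.card_zmod, mul_comm]

theorem Function.injective_of_card_range_eq {α β : Type*} [Finite α] {f : α → β}
    (h : Nat.card (Set.range f) = Nat.card α) : Function.Injective f :=
  Set.injOn_univ.1 <| Set.injOn_of_ncard_image_eq <| by
    rwa [Set.image_univ, Set.ncard_univ, ← Nat.card_coe_set_eq]

theorem two_mul_ncard_setOf_apply_eq_zero {A B : Type*} [AddGroup A] [Fintype A] [Zero B]
    [Fintype B] (β : B → A →+ ZMod 2) (hβ : ∀ b, β b = 0 ↔ b = 0) :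
    2 * {p : A × B | β p.2 p.1 = 0}.ncard = Fintype.card A * (Fintype.card B + 1) := by
  classical
  have two_mul_card_fiber : ∀ b,
      2 * #{a | β b a = 0} = Fintype.card A + if b = 0 then Fintype.card A else 0 := by
    intro b
    split_ifs with hb
    · simp [hb, (hβ 0).2 rfl, two_mul]
    · rw [← Nat.card_eq_fintype_card, ← (β b).two_mul_card_ker ((hβ b).not.2 hb), add_zero,
        ← Fintype.card_subtype, ← Nat.card_eq_fintype_card]
      rfl
  rw [Set.ncard_eq_toFinset_card', Set.toFinset_ofPred, card_filter, Fintype.sum_prod_type_right,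
    mul_sum]
  simp only [← card_filter, two_mul_card_fiber, sum_add_distrib, sum_const, card_univ,
    sum_ite_eq', mem_univ, if_true, smul_eq_mul]
  ring

theorem two_mul_ncard_dotProduct_comp_eq_zero {ι κ : Type*} [Fintype ι] [Fintype κ]
    {e : κ → ι} (he : Function.Injective e) :
    2 * {p : (ι → ZMod 2) × (κ → ZMod 2) | (p.1 ∘ e) ⬝ᵥ p.2 = 0}.ncard
      = 2 ^ Fintype.card ι * (2 ^ Fintype.card κ + 1) := by
  classical
  let β (b : κ → ZMod 2) : (ι → ZMod 2) →+ ZMod 2 :=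
    AddMonoidHom.mk' (fun a => (a ∘ e) ⬝ᵥ b) fun a a' => add_dotProduct _ _ _
  have hβ : ∀ b, β b = 0 ↔ b = 0 := by
    refine fun b => ⟨fun hb => funext fun k => ?_, fun hb => ?_⟩
    · simpa [β, dotProduct, Pi.single_apply, he.eq_iff] using
        DFunLike.congr_fun hb (Pi.single (e k) 1)
    · ext a
      simp [β, hb]
  exact (two_mul_ncard_setOf_apply_eq_zero β hβ).trans (by simp)

theorem Submodule.toAddSubgroup_span_zmod {M : Type*} [AddCommGroup M] {m : ℕ}
    [Module (ZMod m) M] (s : Set M) :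
    (span (ZMod m) s).toAddSubgroup = AddSubgroup.closure s := by
  rw [← span_int_eq_addSubgroupClosure,
    ← restrictScalars_span ℤ (ZMod m) ZMod.intCast_surjective]
  rfl

theorem Fintype.range_linearCombination_coprod {M ι κ : Type*} [AddCommGroup M]
    [Module (ZMod 2) M] [Fintype ι] [Fintype κ] (g : ι → M) (h : κ → M) :
    Set.range
        ((Fintype.linearCombination (ZMod 2) g).coprod (Fintype.linearCombination (ZMod 2) h))
      = (AddSubgroup.closure (Set.range g ∪ Set.range h) : Set M) := by
  rw [← LinearMap.coe_range, LinearMap.range_coprod, range_linearCombination,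
    range_linearCombination, ← Submodule.span_union]
  exact congrArg SetLike.coe (Submodule.toAddSubgroup_span_zmod _)

namespace Pauli

variable {n : ℕ}

lemma sip_eq_dotProduct (x y : Pauli n) : sip x y = x.1 ⬝ᵥ y.2 + x.2 ⬝ᵥ y.1 := by
  simp only [sip, dotProduct, sum_add_distrib]

def sipForm (n : ℕ) : LinearMap.BilinForm (ZMod 2) (Pauli n) :=
  LinearMap.mk₂ (ZMod 2) sip
    (fun x y z => by
      simp only [sip_eq_dotProduct, Prod.fst_add, Prod.snd_add, add_dotProduct]; abel)
    (fun a x y => by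
      simp only [sip_eq_dotProduct, Prod.smul_fst, Prod.smul_snd, smul_dotProduct, smul_add])
    (fun x y z => by
      simp only [sip_eq_dotProduct, Prod.fst_add, Prod.snd_add, dotProduct_add]; abel)
    (fun a x y => by
      simp only [sip_eq_dotProduct, Prod.smul_fst, Prod.smul_snd, dotProduct_smul, smul_add])

lemma sipForm_apply (x y : Pauli n) : sipForm n x y = sip x y := rfl

-- `u + v + u v` is `1` exactly when `(u, v) ≠ (0, 0)`.
lemma natCast_wtP (x : Pauli n) :
    (wtP x : ZMod 2) = ∑ i, (x.1 i + x.2 i + x.1 i * x.2 i) := by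
  simp only [wtP, card_filter, Nat.cast_sum]
  congr! 1 with i
  generalize x.1 i = u; generalize x.2 i = v
  decide +revert

lemma natCast_wtP_add (x y : Pauli n) : (wtP (x + y) : ZMod 2) = wtP x + wtP y + sip x y := by
  simp only [natCast_wtP, sip, ← sum_add_distrib]
  congr! 1 with i
  simp only [Prod.fst_add, Prod.snd_add, Pi.add_apply]
  ring

open Submodule

lemma sip_eq_zero_of_mem_span {s : Set (Pauli n)} (hs : ∀ x ∈ s, ∀ y ∈ s, sip x y = 0)
    {x y : Pauli n} (hx : x ∈ span (ZMod 2) s) (hy : y ∈ span (ZMod 2) s) : sip x y = 0 := by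
  have hsy : ∀ x ∈ s, sip x y = 0 := fun x hx =>
    LinearMap.eqOn_span' (f := sipForm n x) (g := 0) (hs x hx) hy
  exact LinearMap.eqOn_span' (f := (sipForm n).flip y) (g := 0) hsy hx

lemma even_wtP_of_mem_span {s : Set (Pauli n)} (hs : ∀ x ∈ s, ∀ y ∈ s, sip x y = 0)
    (hev : ∀ x ∈ s, Even (wtP x)) {z : Pauli n} (hz : z ∈ span (ZMod 2) s) :
    Even (wtP z) := by
  simp_rw [← ZMod.natCast_eq_zero_iff_even] at hev ⊢
  induction hz using span_induction with
  | mem x hx => exact hev x hx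
  | zero => simp [wtP]
  | add x y hx hy ihx ihy => rw [natCast_wtP_add, ihx, ihy, sip_eq_zero_of_mem_span hs hx hy]; ring
  | smul a x _ ihx =>
    obtain rfl | rfl : a = 0 ∨ a = 1 := by decide +revert
    · simp [wtP]
    · rwa [one_smul]

lemma even_wtP_linearCombination {ι : Type*} [Fintype ι] {g : ι → Pauli n}
    (hgg : ∀ i j, sip (g i) (g j) = 0) (hgeven : ∀ i, Even (wtP (g i))) (a : ι → ZMod 2) :
    Even (wtP (Fintype.linearCombination (ZMod 2) g a)) := by
  refine even_wtP_of_mem_span (s := Set.range g) ?_ ?_ ?_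
  · rintro _ ⟨i, rfl⟩ _ ⟨j, rfl⟩
    exact hgg i j
  · rintro _ ⟨i, rfl⟩
    exact hgeven i
  · rw [← Fintype.range_linearCombination]
    exact LinearMap.mem_range_self _ a

lemma sip_linearCombination {ι κ : Type*} [Fintype ι] [Fintype κ] (g : ι → Pauli n)
    (h : κ → Pauli n) (a : ι → ZMod 2) (b : κ → ZMod 2) :
    sip (Fintype.linearCombination (ZMod 2) g a) (Fintype.linearCombination (ZMod 2) h b)
      = ∑ i, ∑ j, a i * b j * sip (g i) (h j) := by
  simp only [← sipForm_apply, Fintype.linearCombination_apply, map_sum, map_smul,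
    LinearMap.sum_apply, LinearMap.smul_apply, smul_eq_mul, mul_sum, mul_assoc]
  rw [sum_comm]
  congr! 2
  ring

lemma natCast_wtP_linearCombination_coprod {c r : ℕ} {g : Fin (c + r) → Pauli n}
    {h : Fin c → Pauli n} (hgg : ∀ i j, sip (g i) (g j) = 0)
    (hhh : ∀ i j, sip (h i) (h j) = 0)
    (hgh : ∀ i j, sip (g i) (h j) = if (i : ℕ) = (j : ℕ) then 1 else 0)
    (hgeven : ∀ i, Even (wtP (g i))) (hheven : ∀ j, Even (wtP (h j)))
    (p : (Fin (c + r) → ZMod 2) × (Fin c → ZMod 2)) :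
    (wtP ((Fintype.linearCombination (ZMod 2) g).coprod (Fintype.linearCombination (ZMod 2) h) p) :
      ZMod 2) = (p.1 ∘ Fin.castAdd r) ⬝ᵥ p.2 := by
  have hdelta : ∀ (i : Fin (c + r)) (j : Fin c),
      ((i : ℕ) = (j : ℕ)) = (i = Fin.castAdd r j) := by
    simp [Fin.ext_iff]
  rw [LinearMap.coprod_apply, natCast_wtP_add,
    ZMod.natCast_eq_zero_iff_even.2 (even_wtP_linearCombination hgg hgeven p.1),
    ZMod.natCast_eq_zero_iff_even.2 (even_wtP_linearCombination hhh hheven p.2),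
    sip_linearCombination, sum_comm]
  simp [hgh, hdelta, dotProduct]

end Pauli

open Pauli

/-- Type I: all generators of even weight. The conclusions are stated multiplied by 2,
so that `2^{r-1}(4^c ± 2^c)` makes sense also for `r = 0` (where it means `(4^c ± 2^c)/2`). -/
theorem typeI_weight_count {n c r : ℕ} (g : Fin (c + r) → Pauli n) (h : Fin c → Pauli n)
    (hgg : ∀ i j, sip (g i) (g j) = 0)
    (hhh : ∀ i j, sip (h i) (h j) = 0)
    (hgh : ∀ (i : Fin (c + r)) (j : Fin c), sip (g i) (h j) = if (i : ℕ) = (j : ℕ) then 1 else 0)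
    (hcard : Nat.card (AddSubgroup.closure (Set.range g ∪ Set.range h) : AddSubgroup (Pauli n))
      = 2 ^ (2 * c + r))
    (hgeven : ∀ i, Even (wtP (g i))) (hheven : ∀ j, Even (wtP (h j))) :
    2 * {x | x ∈ AddSubgroup.closure (Set.range g ∪ Set.range h) ∧ Even (wtP x)}.ncard
        = 2 ^ r * (4 ^ c + 2 ^ c) ∧
    2 * {x | x ∈ AddSubgroup.closure (Set.range g ∪ Set.range h) ∧ ¬ Even (wtP x)}.ncard
        = 2 ^ r * (4 ^ c - 2 ^ c) := by
  set V := AddSubgroup.closure (Set.range g ∪ Set.range h)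
  set φ := (Fintype.linearCombination (ZMod 2) g).coprod (Fintype.linearCombination (ZMod 2) h)
  have hrange : Set.range φ = V := Fintype.range_linearCombination_coprod g h
  have hinj : Function.Injective φ := Function.injective_of_card_range_eq <| by
    rw [hrange, SetLike.coe_sort_coe, hcard]
    simp [Nat.card_eq_fintype_card]
    ring
  have hmem : ∀ p, φ p ∈ V := fun p => SetLike.mem_coe.1 (hrange ▸ Set.mem_range_self p)
  have hparity :
      φ ⁻¹' {x | x ∈ V ∧ Even (wtP x)} = {p | (p.1 ∘ Fin.castAdd r) ⬝ᵥ p.2 = 0} := by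
    ext p
    rw [Set.mem_preimage, Set.mem_ofPred_eq, and_iff_right (hmem p),
      ← ZMod.natCast_eq_zero_iff_even,
      natCast_wtP_linearCombination_coprod hgg hhh hgh hgeven hheven]
    rfl
  have heven : 2 * {x | x ∈ V ∧ Even (wtP x)}.ncard = 2 ^ r * (4 ^ c + 2 ^ c) := by
    rw [← Set.ncard_preimage_of_injective_subset_range hinj (hrange ▸ fun x hx => hx.1),
      hparity, two_mul_ncard_dotProduct_comp_eq_zero (Fin.castAdd_injective c r),
      Fintype.card_fin, Fintype.card_fin, show (4 : ℕ) = 2 ^ 2 by rfl, ← pow_mul]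
    ring
  have htotal : {x | x ∈ V ∧ Even (wtP x)}.ncard + {x | x ∈ V ∧ ¬ Even (wtP x)}.ncard
      = 2 ^ (2 * c + r) := by
    rw [← hcard, ← Nat.card_coe_set_eq]
    exact Set.ncard_inter_add_ncard_sdiff_eq_ncard (V : Set (Pauli n)) {x | Even (wtP x)}
  refine ⟨heven, ?_⟩
  have hle : 2 ^ c ≤ 4 ^ c := Nat.pow_le_pow_left (by norm_num) c
  have h4 : (4 : ℤ) ^ c = 2 ^ (2 * c) := by rw [pow_mul]; norm_num
  zify [hle] at heven htotal ⊢
  rw [h4] at heven ⊢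
  linear_combination 2 * htotal - heven
end

section
/- Let V ⊆ (ℤ/2)^{2n} be a subgroup generated by 2c symplectic-pair generators and r ≥ 1 isotropic generators satisfying the standard commutation relations, all independent, where exactly one isotropic generator has odd weight and all other generators (symplectic and isotropic) have even weight. Then the number of elements of V of even weight equals the number of elements of odd weight, both equal to 2^{2c+r-1}. -/
/-! The odd-weight isotropic generator `t` commutes with every generator, hence with all of `V`.
Since `wt (x + t) ≡ wt x + wt t + ⟨x, t⟩ (mod 2)`, translation by `t` is a bijection of `V`
exchanging its even- and odd-weight elements, so each class has half of the `2 ^ (2c + r)`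
elements. -/

open Finset

namespace AddSubgroup

variable {G : Type*} [AddGroup G] (V : AddSubgroup G) (P : G → Prop)

theorem ncard_setOf_mem_and_eq_ncard_setOf_mem_and_not {t : G} (ht : t ∈ V)
    (hswap : ∀ x ∈ V, P (x + t) ↔ ¬ P x) :
    {x | x ∈ V ∧ P x}.ncard = {x | x ∈ V ∧ ¬ P x}.ncard := by
  have himage : (· + t) '' {x | x ∈ V ∧ P x} = {x | x ∈ V ∧ ¬ P x} := by
    ext y
    constructor
    · rintro ⟨x, ⟨hxV, hPx⟩, rfl⟩
      exact ⟨V.add_mem hxV ht, fun hP => (hswap x hxV).mp hP hPx⟩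
    · rintro ⟨hyV, hPy⟩
      have hyt : y - t ∈ V := V.sub_mem hyV ht
      refine ⟨y - t, ⟨hyt, ?_⟩, sub_add_cancel y t⟩
      by_contra hP
      exact hPy (by simpa using (hswap _ hyt).mpr hP)
  rw [← himage, Set.ncard_image_of_injective _ (add_left_injective t)]

theorem ncard_setOf_mem_and_add_ncard_setOf_mem_and_not (hV : (V : Set G).Finite) :
    {x | x ∈ V ∧ P x}.ncard + {x | x ∈ V ∧ ¬ P x}.ncard = Nat.card V :=
  (Set.ncard_inter_add_ncard_sdiff_eq_ncard (V : Set G) {x | P x} hV).trans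
    (Nat.card_coe_set_eq _).symm

theorem two_mul_ncard_setOf_mem_and_eq_card {t : G} (ht : t ∈ V)
    (hswap : ∀ x ∈ V, P (x + t) ↔ ¬ P x) (hV : (V : Set G).Finite) :
    2 * {x | x ∈ V ∧ P x}.ncard = Nat.card V ∧
      2 * {x | x ∈ V ∧ ¬ P x}.ncard = Nat.card V := by
  have hsum := V.ncard_setOf_mem_and_add_ncard_setOf_mem_and_not P hV
  have heq := V.ncard_setOf_mem_and_eq_ncard_setOf_mem_and_not P ht hswap
  omega

end AddSubgroup

section Pauli

variable {n : ℕ}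

theorem sip_comm (a b : Pauli n) : sip a b = sip b a := by
  unfold sip
  congr 1
  ext i
  ring

theorem sip_add_right (a x y : Pauli n) : sip a (x + y) = sip a x + sip a y := by
  unfold sip
  rw [← Finset.sum_add_distrib]
  congr 1
  ext i
  simp only [Prod.fst_add, Prod.snd_add, Pi.add_apply]
  ring

theorem sip_eq_zero_of_mem_closure {a x : Pauli n} {S : Set (Pauli n)}
    (hS : ∀ s ∈ S, sip a s = 0) (hx : x ∈ AddSubgroup.closure S) : sip a x = 0 :=
  (AddSubgroup.closure_le (K := (AddMonoidHom.mk' (sip a) (sip_add_right a)).ker)).mpr hS hx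

theorem natCast_wtP_add (x y : Pauli n) :
    (wtP (x + y) : ZMod 2) = wtP x + wtP y + sip x y := by
  simp only [wtP, sip, Finset.card_filter, Nat.cast_sum, Nat.cast_ite, Nat.cast_one,
    Nat.cast_zero, ← Finset.sum_add_distrib]
  congr 1
  ext i
  have hqubit : ∀ a b a' b' : ZMod 2,
      (if a + a' ≠ 0 ∨ b + b' ≠ 0 then (1 : ZMod 2) else 0) =
        (if a ≠ 0 ∨ b ≠ 0 then 1 else 0) + (if a' ≠ 0 ∨ b' ≠ 0 then 1 else 0) +
          (a * b' + b * a') := by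
    decide
  exact hqubit (x.1 i) (x.2 i) (y.1 i) (y.2 i)

theorem even_wtP_add_iff_not_even {x t : Pauli n} (hxt : sip x t = 0)
    (ht : ¬ Even (wtP t)) : Even (wtP (x + t)) ↔ ¬ Even (wtP x) := by
  rw [← ZMod.natCast_eq_zero_iff_even] at ht
  rw [← ZMod.natCast_eq_zero_iff_even, ← ZMod.natCast_eq_zero_iff_even, natCast_wtP_add, hxt]
  generalize (wtP x : ZMod 2) = a at *
  generalize (wtP t : ZMod 2) = b at *
  revert a b
  decide

end Pauli

theorem typeII_weight_count_general {n c r : ℕ}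
    (g : Fin (c + r) → Pauli n) (h : Fin c → Pauli n)
    (hgg : ∀ i j, sip (g i) (g j) = 0)
    (hgh : ∀ (i : Fin (c + r)) (j : Fin c), sip (g i) (h j) = if (i : ℕ) = (j : ℕ) then 1 else 0)
    (hcard : Nat.card (AddSubgroup.closure (Set.range g ∪ Set.range h) : AddSubgroup (Pauli n))
      = 2 ^ (2 * c + r))
    (hodd : ∃ i₀ : Fin (c + r), c ≤ (i₀ : ℕ) ∧ ¬ Even (wtP (g i₀)) ∧
      ∀ i, i ≠ i₀ → Even (wtP (g i))) :
    {x | x ∈ AddSubgroup.closure (Set.range g ∪ Set.range h) ∧ Even (wtP x)}.ncard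
        = 2 ^ (2 * c + r - 1) ∧
    {x | x ∈ AddSubgroup.closure (Set.range g ∪ Set.range h) ∧ ¬ Even (wtP x)}.ncard
        = 2 ^ (2 * c + r - 1) := by
  obtain ⟨i₀, hi₀c, hi₀odd, -⟩ := hodd
  set V := AddSubgroup.closure (Set.range g ∪ Set.range h)
  have hcentral : ∀ x ∈ V, sip x (g i₀) = 0 := by
    refine fun x hx => (sip_comm _ _).trans (sip_eq_zero_of_mem_closure ?_ hx)
    rintro _ (⟨i, rfl⟩ | ⟨j, rfl⟩)
    · exact hgg i₀ i
    · rw [hgh i₀ j, if_neg (by omega)]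
  have hswap : ∀ x ∈ V, Even (wtP (x + g i₀)) ↔ ¬ Even (wtP x) :=
    fun x hx => even_wtP_add_iff_not_even (hcentral x hx) hi₀odd
  have hhalf : 2 ^ (2 * c + r) = 2 * 2 ^ (2 * c + r - 1) := by
    rw [← pow_succ']
    congr 1
    omega -- `r ≥ 1` since `c ≤ i₀ < c + r`
  obtain ⟨heven, hodd⟩ := V.two_mul_ncard_setOf_mem_and_eq_card (fun x => Even (wtP x))
    (AddSubgroup.subset_closure (Or.inl ⟨i₀, rfl⟩)) hswap (Set.toFinite _)
  constructor <;> omega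

/-- Type II: exactly one isotropic generator of odd weight, all other generators even. -/
theorem typeII_weight_count {n c r : ℕ} (hr : 1 ≤ r)
    (g : Fin (c + r) → Pauli n) (h : Fin c → Pauli n)
    (hgg : ∀ i j, sip (g i) (g j) = 0)
    (hhh : ∀ i j, sip (h i) (h j) = 0)
    (hgh : ∀ (i : Fin (c + r)) (j : Fin c), sip (g i) (h j) = if (i : ℕ) = (j : ℕ) then 1 else 0)
    (hcard : Nat.card (AddSubgroup.closure (Set.range g ∪ Set.range h) : AddSubgroup (Pauli n))
      = 2 ^ (2 * c + r))
    (hodd : ∃ i₀ : Fin (c + r), c ≤ (i₀ : ℕ) ∧ ¬ Even (wtP (g i₀)) ∧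
      ∀ i, i ≠ i₀ → Even (wtP (g i)))
    (hheven : ∀ j, Even (wtP (h j))) :
    {x | x ∈ AddSubgroup.closure (Set.range g ∪ Set.range h) ∧ Even (wtP x)}.ncard
        = 2 ^ (2 * c + r - 1) ∧
    {x | x ∈ AddSubgroup.closure (Set.range g ∪ Set.range h) ∧ ¬ Even (wtP x)}.ncard
        = 2 ^ (2 * c + r - 1) :=
  typeII_weight_count_general g h hgg hgh hcard hodd
end

section
/- Let B: {0,…,n} × {0,…,c} → ℝ and B⊥: {0,…,n} × {0,…,c} → ℝ be related by the MacWilliams transform B_{i,j} = (1/(2^{n+c} M)) Σ_{u=0}^{n} Σ_{v=0}^{c} B⊥_{u,v} K_i(u;n) K_j(v;c). Suppose B and B⊥ satisfy: B_{0,0}=B⊥_{0,0}=1; 0 ≤ B_{i,j} ≤ B⊥_{i,j}; B_{i,0}=B⊥_{i,0} for 1 ≤ i ≤ d-1. Let f(x,y) = Σ_{i,j} f_{i,j} K_i(x;n) K_j(y;c) with all f_{i,j} ≥ 0, f_{i,0} > 0 for 0 ≤ i ≤ d-1, and f(x,y) ≤ 0 whenever x ≥ d or y ≥ 1 (over integer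 points in the valid range). Then M ≤ (1/2^{n+c}) · max_{0 ≤ l ≤ d-1} f(l,0)/f_{l,0}. -/
open Finset

/-- Quaternary Krawtchouk polynomial at integer points. -/
noncomputable def kraw (n i x : ℕ) : ℝ :=
  ∑ j ∈ Finset.range (i + 1),
    (-1 : ℝ) ^ j * 3 ^ (i - j) * (x.choose j) * ((n - x).choose (i - j))

/-! Delsarte's duality argument. Pairing `B⊥` with `f` and expanding `f` in the Krawtchouk
basis, the MacWilliams relation gives `∑ B⊥ f = 2^(n+c) M ∑ fc B`. The sign conditions on `f`
bound the left side above by `∑_{l<d} B_{l,0} f(l,0)`, and nonnegativity of `fc` and `B` bounds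
the right side below by `2^(n+c) M ∑_{l<d} fc_{l,0} B_{l,0}`. Since `B_{0,0} = 1`, the terms
`f(l,0) - 2^(n+c) M fc_{l,0}` of this `B`-weighted sum cannot all be negative. -/

theorem exists_nonneg_of_sum_mul_nonneg {ι R : Type*} [Ring R] [LinearOrder R]
    [IsStrictOrderedRing R] {s : Finset ι} {w g : ι → R} (hw : ∀ i ∈ s, 0 ≤ w i)
    {i₀ : ι} (hi₀ : i₀ ∈ s) (hw₀ : 0 < w i₀) (hsum : 0 ≤ ∑ i ∈ s, w i * g i) :
    ∃ i ∈ s, 0 ≤ g i := by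
  by_contra! hg
  have : ∑ i ∈ s, w i * g i < 0 :=
    sum_neg' (fun i hi => mul_nonpos_of_nonneg_of_nonpos (hw i hi) (hg i hi).le)
      ⟨i₀, hi₀, mul_neg_of_pos_of_neg hw₀ (hg i₀ hi₀)⟩
  exact this.not_ge hsum

theorem sum_sum_mul_kernel_transform {α β R : Type*} [CommSemiring R]
    (s : Finset α) (t : Finset β) (a b : α → β → R) (P : α → α → R) (Q : β → β → R) :
    ∑ u ∈ s, ∑ v ∈ t, a u v * ∑ i ∈ s, ∑ j ∈ t, b i j * P i u * Q j v =
      ∑ i ∈ s, ∑ j ∈ t, b i j * ∑ u ∈ s, ∑ v ∈ t, a u v * P i u * Q j v := by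
  simp only [mul_sum]
  calc _ = ∑ u ∈ s, ∑ i ∈ s, ∑ v ∈ t, ∑ j ∈ t, a u v * (b i j * P i u * Q j v) :=
        sum_congr rfl fun _ _ => sum_comm
    _ = ∑ i ∈ s, ∑ u ∈ s, ∑ j ∈ t, ∑ v ∈ t, a u v * (b i j * P i u * Q j v) := by
        rw [sum_comm]; exact sum_congr rfl fun _ _ => sum_congr rfl fun _ _ => sum_comm
    _ = _ := sum_congr rfl fun _ _ => by
        rw [sum_comm]
        exact sum_congr rfl fun _ _ => sum_congr rfl fun _ _ => sum_congr rfl fun _ _ => by ring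

theorem sum_mul_eq_mul_sum_of_macWilliams {n c : ℕ} {M : ℝ} (hM : M ≠ 0)
    {B Bp fc f : ℕ → ℕ → ℝ}
    (hMacW : ∀ i ≤ n, ∀ j ≤ c, B i j =
      (1 / (2 ^ (n + c) * M)) * ∑ u ∈ range (n + 1), ∑ v ∈ range (c + 1),
        Bp u v * kraw n i u * kraw c j v)
    (hf : ∀ x y, f x y = ∑ i ∈ range (n + 1), ∑ j ∈ range (c + 1),
      fc i j * kraw n i x * kraw c j y) :
    ∑ u ∈ range (n + 1), ∑ v ∈ range (c + 1), Bp u v * f u v =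
      2 ^ (n + c) * M * ∑ i ∈ range (n + 1), ∑ j ∈ range (c + 1), fc i j * B i j := by
  simp only [hf]
  rw [sum_sum_mul_kernel_transform, mul_sum]
  refine sum_congr rfl fun i hi => ?_
  rw [mul_sum]
  refine sum_congr rfl fun j hj => ?_
  rw [hMacW i (Nat.lt_succ_iff.1 (mem_range.1 hi)) j (Nat.lt_succ_iff.1 (mem_range.1 hj))]
  field_simp

theorem sum_range_le_sum_grid {n c d : ℕ} (hdn : d ≤ n) (g : ℕ → ℕ → ℝ)
    (hg : ∀ x ≤ n, ∀ y ≤ c, (d ≤ x ∨ 1 ≤ y) → 0 ≤ g x y) :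
    ∑ l ∈ range d, g l 0 ≤ ∑ u ∈ range (n + 1), ∑ v ∈ range (c + 1), g u v := by
  have hhead : ∑ l ∈ range d, g l 0 = ∑ p ∈ range d ×ˢ {0}, g p.1 p.2 := by
    rw [sum_product]; simp
  rw [hhead, ← sum_product']
  refine sum_le_sum_of_subset_of_nonneg
    (product_subset_product (range_subset_range.2 (by omega)) (by simp)) ?_
  rintro ⟨x, y⟩ hxy hout
  simp only [mem_product, mem_range, mem_singleton, not_and_or, not_lt] at hxy hout
  exact hg x (by omega) y (by omega) (by omega)

/-- Theorem 3 of the paper (general linear programming bound), abstracted to split weight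
distributions `B, B⊥` related by the MacWilliams transform. -/
theorem ea_lp_bound (n c d : ℕ) (hd : 1 ≤ d) (hdn : d ≤ n)
    (M : ℝ) (hM : 0 < M)
    (B Bp : ℕ → ℕ → ℝ)
    (hMacW : ∀ i ≤ n, ∀ j ≤ c, B i j =
      (1 / (2 ^ (n + c) * M)) * ∑ u ∈ Finset.range (n + 1), ∑ v ∈ Finset.range (c + 1),
        Bp u v * kraw n i u * kraw c j v)
    (hB00 : B 0 0 = 1) (hBp00 : Bp 0 0 = 1)
    (hBnonneg : ∀ i ≤ n, ∀ j ≤ c, 0 ≤ B i j)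
    (hBle : ∀ i ≤ n, ∀ j ≤ c, B i j ≤ Bp i j)
    (hBeq : ∀ i, 1 ≤ i → i ≤ d - 1 → B i 0 = Bp i 0)
    (fc : ℕ → ℕ → ℝ)
    (hfc : ∀ i ≤ n, ∀ j ≤ c, 0 ≤ fc i j)
    (hfc0 : ∀ i ≤ d - 1, 0 < fc i 0)
    (f : ℕ → ℕ → ℝ)
    (hf : ∀ x y, f x y = ∑ i ∈ Finset.range (n + 1), ∑ j ∈ Finset.range (c + 1),
      fc i j * kraw n i x * kraw c j y)
    (hfneg : ∀ x ≤ n, ∀ y ≤ c, (d ≤ x ∨ 1 ≤ y) → f x y ≤ 0) :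
    ∃ l ≤ d - 1, M ≤ (1 / 2 ^ (n + c)) * (f l 0 / fc l 0) := by
  set K : ℝ := 2 ^ (n + c) * M
  have hBp : ∀ u ≤ n, ∀ v ≤ c, 0 ≤ Bp u v := fun u hu v hv =>
    (hBnonneg u hu v hv).trans (hBle u hu v hv)
  have hBhead : ∀ l ∈ range d, B l 0 = Bp l 0 := fun l hl => by
    rcases Nat.eq_zero_or_pos l with rfl | hl0
    · rw [hB00, hBp00]
    · exact hBeq l hl0 (by simp at hl; omega)
  have hupper := sum_range_le_sum_grid hdn (fun u v => -(Bp u v * f u v))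
    fun x hx y hy hxy => neg_nonneg.2 (mul_nonpos_of_nonneg_of_nonpos (hBp x hx y hy)
      (hfneg x hx y hy hxy))
  simp only [sum_neg_distrib, neg_le_neg_iff] at hupper
  have hchain : K * ∑ l ∈ range d, fc l 0 * Bp l 0 ≤ ∑ l ∈ range d, Bp l 0 * f l 0 :=
    calc K * ∑ l ∈ range d, fc l 0 * Bp l 0 = K * ∑ l ∈ range d, fc l 0 * B l 0 := by
          rw [sum_congr rfl fun l hl => by rw [← hBhead l hl]]
      _ ≤ K * ∑ i ∈ range (n + 1), ∑ j ∈ range (c + 1), fc i j * B i j := by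
          gcongr
          exact sum_range_le_sum_grid hdn (fun i j => fc i j * B i j)
            fun x hx y hy _ => mul_nonneg (hfc x hx y hy) (hBnonneg x hx y hy)
      _ = ∑ u ∈ range (n + 1), ∑ v ∈ range (c + 1), Bp u v * f u v :=
          (sum_mul_eq_mul_sum_of_macWilliams hM.ne' hMacW hf).symm
      _ ≤ ∑ l ∈ range d, Bp l 0 * f l 0 := hupper
  have hweighted : 0 ≤ ∑ l ∈ range d, Bp l 0 * (f l 0 - K * fc l 0) := by
    simp only [mul_sub, sum_sub_distrib, sub_nonneg, mul_sum] at hchain ⊢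
    convert hchain using 2
    ring
  obtain ⟨l, hl, hfl⟩ := exists_nonneg_of_sum_mul_nonneg
    (fun l hl => hBp l (by simp at hl; omega) 0 c.zero_le) (mem_range.2 hd) (by simp [hBp00])
    hweighted
  have hld : l ≤ d - 1 := by simp at hl; omega
  refine ⟨l, hld, ?_⟩
  rw [one_div_mul_eq_div, div_div, le_div_iff₀ (mul_pos (hfc0 l hld) (by positivity))]
  linarith
end

section
/- For any nondegenerate ((n,M,d;c)) entanglement-assisted quantum code (i.e., whose weight distributions satisfy B_{i,0}=0 for 0<i<d in addition to the MacWilliams constraints), M · Σ_{j=0}^{t} 3^j binom(n,j) ≤ 2^{n+c}, where t = ⌊(d-1)/2⌋. (Abstract version: under the hypotheses of the general LP theorem with the additional constraint B_{i,0}=0 for 0<i<d, applying the Hamming polynomial f(x,y) with coefficients f_{l,j} = (Σ_{i=0}^{t} K_i(l;n))² yields this bound.) -/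
/-!
Delsarte's linear programming argument. Pairing the MacWilliams identities with coefficients
`f i j ≥ 0` gives `2^(n+c) M f₀₀ ≤ f̂(0,0)` as soon as `B⊥(u,v) f̂(u,v) ≤ 0` away from the origin,
where `f̂(u,v) = ∑ f i j Kᵢ(u) Kⱼ(v)`. Take `f i j = (∑_{l ≤ t} K_l(i))²` with `t = ⌊(d-1)/2⌋`.
Then `f̂(u,v)` vanishes for `v ≠ 0`, and writing `Kᵢ(|y|)` as the sum of the characters
`x ↦ (-1)^⟨x,y⟩` of `(𝔽₂²)ⁿ` over the sphere of radius `i`, `f̂(u,0)` is `4^(n+c)` times the number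
of ways to write a fixed word of weight `u` as the sum of two words of the Hamming ball of radius
`t`. This is the volume `V` of the ball for `u = 0` and zero for `u > 2t`, while nondegeneracy kills
`B⊥(u,0)` for `0 < u ≤ 2t < d`. Hence `2^(n+c) M V² ≤ 4^(n+c) V`.
-/

open Finset

open Polynomial

theorem coeff_one_add_C_mul_X_pow {R : Type*} [CommSemiring R] (a : R) (m k : ℕ) :
    ((1 + C a * X) ^ m).coeff k = a ^ k * m.choose k := by
  rw [add_comm, add_pow, finsetSum_coeff]
  simp_rw [one_pow, mul_one, mul_pow, ← C_pow, ← C_eq_natCast, mul_right_comm _ (X ^ _), ← C_mul,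
    coeff_C_mul_X_pow, sum_ite_eq, mem_range]
  split_ifs with hk
  · rfl
  · rw [Nat.choose_eq_zero_of_lt (by omega), Nat.cast_zero, mul_zero]

theorem kraw_eq_coeff (n i u : ℕ) :
    kraw n i u = ((1 - X) ^ u * (1 + C 3 * X) ^ (n - u) : ℝ[X]).coeff i := by
  have h : (1 - X : ℝ[X]) = 1 + C (-1) * X := by simp [sub_eq_add_neg]
  rw [h, coeff_mul, Nat.sum_antidiagonal_eq_sum_range_succ_mk, kraw]
  refine sum_congr rfl fun j _ => ?_
  rw [coeff_one_add_C_mul_X_pow, coeff_one_add_C_mul_X_pow]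
  ring

theorem kraw_zero_right (n l : ℕ) : kraw n l 0 = 3 ^ l * n.choose l := by
  simp [kraw_eq_coeff, coeff_one_add_C_mul_X_pow]

theorem sum_kraw {c v : ℕ} (hv : v ≤ c) :
    ∑ j ∈ range (c + 1), kraw c j v = if v = 0 then 4 ^ c else 0 := by
  have hdeg : ((1 - X) ^ v * (1 + C 3 * X) ^ (c - v) : ℝ[X]).natDegree < c + 1 := by
    compute_degree
    omega
  have h := eval_eq_sum_range' hdeg 1
  simp only [one_pow, mul_one] at h
  simp_rw [kraw_eq_coeff, ← h]
  rcases v with _ | v <;> norm_num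

noncomputable def hammingCoeff (n t l : ℕ) : ℝ := (∑ i ∈ range (t + 1), kraw n i l) ^ 2

theorem hammingCoeff_zero_right (n t : ℕ) :
    hammingCoeff n t 0 = (∑ l ∈ range (t + 1), (3 : ℝ) ^ l * n.choose l) ^ 2 := by
  simp only [hammingCoeff, kraw_zero_right]

noncomputable def krawTransform (n c : ℕ) (f : ℕ → ℕ → ℝ) (u v : ℕ) : ℝ :=
  ∑ i ∈ range (n + 1), ∑ j ∈ range (c + 1), f i j * kraw n i u * kraw c j v

theorem krawTransform_const_right (n : ℕ) {c v : ℕ} (g : ℕ → ℝ) (u : ℕ) (hv : v ≤ c) :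
    krawTransform n c (fun i _ => g i) u v =
      (∑ i ∈ range (n + 1), g i * kraw n i u) * if v = 0 then 4 ^ c else 0 := by
  rw [krawTransform, ← sum_kraw hv, sum_mul_sum]

theorem hammingNorm_add_le {ι : Type*} [Fintype ι] [DecidableEq ι] {β : ι → Type*}
    [∀ i, AddZeroClass (β i)] [∀ i, DecidableEq (β i)] (x y : ∀ i, β i) :
    hammingNorm (x + y) ≤ hammingNorm x + hammingNorm y := by
  refine (card_le_card fun i => ?_).trans (card_union_le _ _)
  simp only [mem_filter, mem_univ, true_and, mem_union, Pi.add_apply]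
  contrapose!
  rintro ⟨hx, hy⟩
  rw [hx, hy, add_zero]

namespace Quaternary

noncomputable def signChar : AddChar (ZMod 2) ℝ := AddChar.zmodChar 2 (ζ := -1) (by norm_num)

theorem signChar_one : signChar 1 = -1 := by simp [signChar, AddChar.zmodChar_apply, ZMod.val_one]

-- The paper's symplectic form would serve equally well: only nondegeneracy matters.
noncomputable def pairSign (p q : ZMod 2 × ZMod 2) : ℝ := signChar (p.1 * q.1 + p.2 * q.2)

theorem pairSign_comm (p q : ZMod 2 × ZMod 2) : pairSign p q = pairSign q p := by
  simp only [pairSign, mul_comm]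

theorem pairSign_add_right (p q q' : ZMod 2 × ZMod 2) :
    pairSign p (q + q') = pairSign p q * pairSign p q' := by
  rw [pairSign, pairSign, pairSign, ← AddChar.map_add_eq_mul]
  congr 1
  simp only [Prod.fst_add, Prod.snd_add]
  ring

theorem sum_pairSign_mul (q : ZMod 2 × ZMod 2) :
    ∑ p, C (pairSign p q) * (if p = 0 then 1 else X : ℝ[X]) =
      if q = 0 then 1 + C 3 * X else 1 - X := by
  have h01 : ∀ a : ZMod 2, a = 0 ∨ a = 1 := by decide
  have h2 : ∀ f : ZMod 2 → ℝ[X], ∑ a, f a = f 0 + f 1 := fun f => Fin.sum_univ_two f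
  obtain ⟨a, b⟩ := q
  rcases h01 a with rfl | rfl <;> rcases h01 b with rfl | rfl <;>
    simp only [Fintype.sum_prod_type, h2, pairSign, mul_zero, mul_one, add_zero, zero_add,
      (by decide : (1 + 1 : ZMod 2) = 0), AddChar.map_zero_eq_one, signChar_one, Prod.ext_iff,
      Prod.fst_zero, Prod.snd_zero, and_self, and_true, and_false, one_ne_zero, ↓reduceIte,
      map_one, map_neg, one_mul, neg_mul, C_ofNat] <;>
    ring

variable {ι : Type*}

noncomputable def chi [Fintype ι] (x y : ι → ZMod 2 × ZMod 2) : ℝ := ∏ i, pairSign (x i) (y i)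

theorem chi_comm [Fintype ι] (x y : ι → ZMod 2 × ZMod 2) : chi x y = chi y x := by
  simp only [chi, pairSign_comm]

theorem chi_add_right [Fintype ι] (x y y' : ι → ZMod 2 × ZMod 2) :
    chi x (y + y') = chi x y * chi x y' := by
  simp only [chi, Pi.add_apply, pairSign_add_right, prod_mul_distrib]

theorem chi_zero_right [Fintype ι] (x : ι → ZMod 2 × ZMod 2) : chi x 0 = 1 := by
  simp [chi, pairSign]

theorem neg_eq_self (x : ι → ZMod 2 × ZMod 2) : -x = x :=
  funext fun i => CharTwo.neg_eq (x i)

theorem sum_chi_mul_X_pow_hammingNorm [Fintype ι] [DecidableEq ι] (y : ι → ZMod 2 × ZMod 2) :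
    ∑ x, C (chi x y) * X ^ hammingNorm x =
      (1 - X) ^ hammingNorm y * (1 + C 3 * X) ^ (Fintype.card ι - hammingNorm y) := by
  have hterm : ∀ x : ι → ZMod 2 × ZMod 2, C (chi x y) * X ^ hammingNorm x =
      ∏ i, C (pairSign (x i) (y i)) * (if x i = 0 then 1 else X) := by
    intro x
    rw [prod_mul_distrib, chi, map_prod, prod_ite, prod_const_one, prod_const, one_mul,
      hammingNorm]
  have hzeros : #{i | y i = 0} = Fintype.card ι - hammingNorm y := by
    rw [hammingNorm, ← card_univ, ← card_filter_add_card_filter_not (s := univ) (y · = 0),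
      Nat.add_sub_cancel]
  rw [sum_congr rfl fun x _ => hterm x,
    ← Fintype.prod_sum fun i p => C (pairSign p (y i)) * (if p = 0 then 1 else X)]
  simp_rw [sum_pairSign_mul]
  rw [prod_ite, prod_const, prod_const, hzeros, mul_comm]
  rfl

theorem sum_chi_sphere [Fintype ι] [DecidableEq ι] (i : ℕ) (y : ι → ZMod 2 × ZMod 2) :
    ∑ x with hammingNorm x = i, chi x y = kraw (Fintype.card ι) i (hammingNorm y) := by
  have h := congrArg (coeff · i) (sum_chi_mul_X_pow_hammingNorm y)
  simp only [finsetSum_coeff, coeff_C_mul, coeff_X_pow, mul_ite, mul_one, mul_zero] at h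
  rw [kraw_eq_coeff, ← h, sum_filter]
  simp_rw [eq_comm]

theorem sum_chi [Fintype ι] [DecidableEq ι] (y : ι → ZMod 2 × ZMod 2) :
    ∑ x, chi x y = if y = 0 then 4 ^ Fintype.card ι else 0 := by
  have h := congrArg (eval 1) (sum_chi_mul_X_pow_hammingNorm y)
  simp only [eval_finsetSum, eval_mul, eval_C, eval_pow, eval_X, one_pow, mul_one, eval_sub,
    eval_add, eval_one, sub_self] at h
  rw [h]
  split_ifs with hy
  · simp only [hy, hammingNorm_zero, pow_zero, tsub_zero, one_mul]
    norm_num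
  · simp [hammingNorm_ne_zero_iff.mpr hy]

theorem exists_hammingNorm_eq [Fintype ι] [DecidableEq ι] {u : ℕ} (hu : u ≤ Fintype.card ι) :
    ∃ y : ι → ZMod 2 × ZMod 2, hammingNorm y = u := by
  obtain ⟨s, -, rfl⟩ := exists_subset_card_eq (s := univ) (by simpa using hu)
  refine ⟨fun i => if i ∈ s then 1 else 0, ?_⟩
  simp [hammingNorm]

theorem sum_mul_kraw_eq_sum_chi [Fintype ι] [DecidableEq ι] (h : ℕ → ℝ)
    (y : ι → ZMod 2 × ZMod 2) :
    ∑ i ∈ range (Fintype.card ι + 1), h i * kraw (Fintype.card ι) i (hammingNorm y) =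
      ∑ x, h (hammingNorm x) * chi x y := by
  rw [← sum_fiberwise_of_maps_to (g := hammingNorm) (t := range (Fintype.card ι + 1))
    fun x _ => mem_range.2 (Nat.lt_succ_of_le hammingNorm_le_card_fintype)]
  refine sum_congr rfl fun i _ => ?_
  rw [← sum_chi_sphere, mul_sum]
  refine sum_congr rfl fun x hx => ?_
  rw [(mem_filter.1 hx).2]

def hammingBall [Fintype ι] [DecidableEq ι] (t : ℕ) : Finset (ι → ZMod 2 × ZMod 2) :=
  {z | hammingNorm z ≤ t}

theorem sum_kraw_eq_sum_hammingBall [Fintype ι] [DecidableEq ι] (t : ℕ)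
    (x : ι → ZMod 2 × ZMod 2) :
    ∑ l ∈ range (t + 1), kraw (Fintype.card ι) l (hammingNorm x) =
      ∑ z ∈ hammingBall t, chi z x := by
  rw [hammingBall, ← sum_fiberwise_of_maps_to (g := hammingNorm) (t := range (t + 1))
    fun z hz => mem_range.2 (Nat.lt_succ_of_le (mem_filter.1 hz).2)]
  refine sum_congr rfl fun l hl => ?_
  rw [← sum_chi_sphere, filter_filter]
  refine sum_congr (filter_congr fun z _ => ?_) fun _ _ => rfl
  have := mem_range.1 hl
  exact ⟨fun h => ⟨by omega, h⟩, And.right⟩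

theorem card_hammingBall [Fintype ι] [DecidableEq ι] (t : ℕ) :
    (#(hammingBall t : Finset (ι → ZMod 2 × ZMod 2)) : ℝ) =
      ∑ l ∈ range (t + 1), (3 : ℝ) ^ l * (Fintype.card ι).choose l := by
  have h := sum_kraw_eq_sum_hammingBall t (0 : ι → ZMod 2 × ZMod 2)
  simp only [hammingNorm_zero, kraw_zero_right, chi_zero_right, sum_const, nsmul_one] at h
  exact h.symm

theorem card_filter_add_eq_zero [Fintype ι] (s : Finset (ι → ZMod 2 × ZMod 2)) :
    #{p ∈ s ×ˢ s | p.1 + p.2 = 0} = #s := by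
  rw [← diag_card s]
  congr 1
  ext ⟨a, b⟩
  simp only [mem_filter, mem_product, mem_diag, add_eq_zero_iff_eq_neg, neg_eq_self]
  constructor
  · rintro ⟨⟨ha, -⟩, rfl⟩; exact ⟨ha, rfl⟩
  · rintro ⟨ha, rfl⟩; exact ⟨⟨ha, ha⟩, rfl⟩

theorem sum_hammingCoeff_mul_kraw [Fintype ι] [DecidableEq ι] (t : ℕ)
    (y : ι → ZMod 2 × ZMod 2) :
    ∑ i ∈ range (Fintype.card ι + 1),
        hammingCoeff (Fintype.card ι) t i * kraw (Fintype.card ι) i (hammingNorm y) =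
      4 ^ Fintype.card ι * #{p ∈ hammingBall t ×ˢ hammingBall t | p.1 + p.2 = y} := by
  rw [sum_mul_kraw_eq_sum_chi]
  simp_rw [hammingCoeff, sum_kraw_eq_sum_hammingBall]
  calc ∑ x, (∑ z ∈ hammingBall t, chi z x) ^ 2 * chi x y
      = ∑ x, ∑ p ∈ hammingBall t ×ˢ hammingBall t, chi x (p.1 + p.2 + y) := by
        refine sum_congr rfl fun x _ => ?_
        simp_rw [sq, sum_mul_sum, sum_mul, ← sum_product', chi_add_right, chi_comm x]
    _ = ∑ p ∈ hammingBall t ×ˢ hammingBall t,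
          if p.1 + p.2 = y then (4 : ℝ) ^ Fintype.card ι else 0 := by
        rw [sum_comm]
        simp_rw [sum_chi, add_eq_zero_iff_eq_neg, neg_eq_self]
    _ = _ := by
        rw [← sum_filter, sum_const, nsmul_eq_mul, mul_comm]

end Quaternary

theorem sum_hammingCoeff_mul_kraw_zero (n t : ℕ) :
    ∑ i ∈ range (n + 1), hammingCoeff n t i * kraw n i 0 =
      4 ^ n * ∑ l ∈ range (t + 1), (3 : ℝ) ^ l * n.choose l := by
  have h := Quaternary.sum_hammingCoeff_mul_kraw (ι := Fin n) t 0
  rw [Quaternary.card_filter_add_eq_zero, Quaternary.card_hammingBall] at h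
  simpa using h

theorem sum_hammingCoeff_mul_kraw_of_lt {n t u : ℕ} (hu : u ≤ n) (htu : 2 * t < u) :
    ∑ i ∈ range (n + 1), hammingCoeff n t i * kraw n i u = 0 := by
  obtain ⟨y, rfl⟩ := Quaternary.exists_hammingNorm_eq (ι := Fin n) (by simpa using hu)
  have h := Quaternary.sum_hammingCoeff_mul_kraw t y
  simp only [Fintype.card_fin] at h
  rw [h, filter_eq_empty_iff.2 fun p hp hpy => ?_, card_empty, Nat.cast_zero, mul_zero]
  simp only [mem_product, Quaternary.hammingBall, mem_filter, mem_univ, true_and] at hp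
  have := hammingNorm_add_le p.1 p.2
  rw [hpy] at this
  omega

theorem mul_krawTransform_hammingCoeff_eq_zero {n c t u v : ℕ} {Bp : ℕ → ℕ → ℝ}
    (hBp : ∀ u, 1 ≤ u → u ≤ 2 * t → Bp u 0 = 0) (hu : u ≤ n) (hv : v ≤ c)
    (huv : u ≠ 0 ∨ v ≠ 0) :
    Bp u v * krawTransform n c (fun i _ => hammingCoeff n t i) u v = 0 := by
  rw [krawTransform_const_right n _ u hv]
  rcases eq_or_ne v 0 with rfl | hv0
  · have hu0 : u ≠ 0 := huv.resolve_right (not_not.2 rfl)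
    rcases le_or_gt u (2 * t) with hut | hut
    · rw [hBp u (Nat.one_le_iff_ne_zero.2 hu0) hut, zero_mul]
    · rw [sum_hammingCoeff_mul_kraw_of_lt hu hut, zero_mul, mul_zero]
  · rw [if_neg hv0, mul_zero, mul_zero]

section MacWilliams

variable {n c : ℕ} {M : ℝ} {B Bp : ℕ → ℕ → ℝ}

theorem sum_mul_eq_of_macWilliams
    (hMacW : ∀ i ≤ n, ∀ j ≤ c, B i j =
      (1 / (2 ^ (n + c) * M)) * ∑ u ∈ range (n + 1), ∑ v ∈ range (c + 1),
        Bp u v * kraw n i u * kraw c j v)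
    (f : ℕ → ℕ → ℝ) :
    ∑ i ∈ range (n + 1), ∑ j ∈ range (c + 1), B i j * f i j =
      (1 / (2 ^ (n + c) * M)) * ∑ u ∈ range (n + 1), ∑ v ∈ range (c + 1),
        Bp u v * krawTransform n c f u v := by
  have hB : ∀ i ∈ range (n + 1), ∀ j ∈ range (c + 1), B i j * f i j =
      ∑ u ∈ range (n + 1), ∑ v ∈ range (c + 1),
        (1 / (2 ^ (n + c) * M)) * (Bp u v * (f i j * kraw n i u * kraw c j v)) := by
    intro i hi j hj
    rw [hMacW i (mem_range_succ_iff.1 hi) j (mem_range_succ_iff.1 hj), mul_sum, sum_mul]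
    refine sum_congr rfl fun u _ => ?_
    rw [mul_sum, sum_mul]
    exact sum_congr rfl fun v _ => by ring
  rw [sum_congr rfl fun i hi => sum_congr rfl fun j hj => hB i hi j hj]
  simp_rw [krawTransform, mul_sum]
  calc _ = ∑ i ∈ range (n + 1), ∑ u ∈ range (n + 1), ∑ j ∈ range (c + 1), ∑ v ∈ range (c + 1),
          1 / (2 ^ (n + c) * M) * (Bp u v * (f i j * kraw n i u * kraw c j v)) :=
        sum_congr rfl fun _ _ => sum_comm
    _ = ∑ u ∈ range (n + 1), ∑ i ∈ range (n + 1), ∑ v ∈ range (c + 1), ∑ j ∈ range (c + 1),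
          1 / (2 ^ (n + c) * M) * (Bp u v * (f i j * kraw n i u * kraw c j v)) := by
        rw [sum_comm]
        exact sum_congr rfl fun _ _ => sum_congr rfl fun _ _ => sum_comm
    _ = _ := sum_congr rfl fun _ _ => sum_comm

theorem linear_programming_bound (hM : 0 < M)
    (hMacW : ∀ i ≤ n, ∀ j ≤ c, B i j =
      (1 / (2 ^ (n + c) * M)) * ∑ u ∈ range (n + 1), ∑ v ∈ range (c + 1),
        Bp u v * kraw n i u * kraw c j v)
    (hB00 : B 0 0 = 1) (hBp00 : Bp 0 0 = 1) (hBnonneg : ∀ i ≤ n, ∀ j ≤ c, 0 ≤ B i j)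
    {f : ℕ → ℕ → ℝ} (hf : ∀ i ≤ n, ∀ j ≤ c, 0 ≤ f i j)
    (hdual : ∀ u ≤ n, ∀ v ≤ c, u ≠ 0 ∨ v ≠ 0 → Bp u v * krawTransform n c f u v ≤ 0) :
    2 ^ (n + c) * M * f 0 0 ≤ krawTransform n c f 0 0 := by
  have hterm : ∀ i ∈ range (n + 1), ∀ j ∈ range (c + 1), 0 ≤ B i j * f i j := by
    intro i hi j hj
    rw [mem_range_succ_iff] at hi hj
    exact mul_nonneg (hBnonneg i hi j hj) (hf i hi j hj)
  have hlower : f 0 0 ≤ ∑ i ∈ range (n + 1), ∑ j ∈ range (c + 1), B i j * f i j :=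
    calc f 0 0 = B 0 0 * f 0 0 := by rw [hB00, one_mul]
      _ ≤ ∑ j ∈ range (c + 1), B 0 j * f 0 j := single_le_sum (hterm 0 (by simp)) (by simp)
      _ ≤ _ := single_le_sum (f := fun i => ∑ j ∈ range (c + 1), B i j * f i j)
          (fun i hi => sum_nonneg (hterm i hi)) (by simp)
  have hupper : ∑ u ∈ range (n + 1), ∑ v ∈ range (c + 1), Bp u v * krawTransform n c f u v ≤
      krawTransform n c f 0 0 :=
    calc _ ≤ ∑ u ∈ range (n + 1), ∑ v ∈ range (c + 1),
            if u = 0 ∧ v = 0 then krawTransform n c f 0 0 else 0 := by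
          gcongr with u hu v hv
          split_ifs with h
          · rw [h.1, h.2, hBp00, one_mul]
          · exact hdual u (mem_range_succ_iff.1 hu) v (mem_range_succ_iff.1 hv) (not_and_or.1 h)
      _ = _ := by simp [ite_and]
  rw [sum_mul_eq_of_macWilliams hMacW] at hlower
  have hK : 0 < 2 ^ (n + c) * M := by positivity
  calc 2 ^ (n + c) * M * f 0 0
      ≤ 2 ^ (n + c) * M * (1 / (2 ^ (n + c) * M) * ∑ u ∈ range (n + 1), ∑ v ∈ range (c + 1),
          Bp u v * krawTransform n c f u v) := by gcongr
    _ ≤ _ := by rwa [← mul_assoc, mul_one_div_cancel hK.ne', one_mul]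

end MacWilliams

theorem ea_nondegenerate_hamming_general (n c d : ℕ)
    (M : ℝ) (hM : 0 < M)
    (B Bp : ℕ → ℕ → ℝ)
    (hMacW : ∀ i ≤ n, ∀ j ≤ c, B i j =
      (1 / (2 ^ (n + c) * M)) * ∑ u ∈ Finset.range (n + 1), ∑ v ∈ Finset.range (c + 1),
        Bp u v * kraw n i u * kraw c j v)
    (hB00 : B 0 0 = 1) (hBp00 : Bp 0 0 = 1)
    (hBnonneg : ∀ i ≤ n, ∀ j ≤ c, 0 ≤ B i j)
    (hnondeg : ∀ i, 1 ≤ i → i ≤ d - 1 → B i 0 = 0 ∧ Bp i 0 = 0) :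
    M * ∑ j ∈ Finset.range ((d - 1) / 2 + 1), (3 : ℝ) ^ j * (n.choose j) ≤ 2 ^ (n + c) := by
  set t := (d - 1) / 2 with ht
  set V := ∑ j ∈ range (t + 1), (3 : ℝ) ^ j * n.choose j
  have hV : 0 < V := lt_of_lt_of_le (by simp)
    (single_le_sum (fun j _ => by positivity) (mem_range.2 t.succ_pos))
  have key := linear_programming_bound hM hMacW hB00 hBp00 hBnonneg
    (f := fun i _ => hammingCoeff n t i) (fun _ _ _ _ => sq_nonneg _)
    fun u hu v hv huv => (mul_krawTransform_hammingCoeff_eq_zero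
      (fun u h1 h2 => (hnondeg u h1 (by omega)).2) hu hv huv).le
  rw [krawTransform_const_right n _ 0 (Nat.zero_le c), sum_hammingCoeff_mul_kraw_zero, if_pos rfl,
    hammingCoeff_zero_right] at key
  have h4 : (4 : ℝ) ^ n * 4 ^ c = 2 ^ (n + c) * 2 ^ (n + c) := by
    rw [← pow_add, ← mul_pow]; norm_num
  have hkey : 2 ^ (n + c) * V * (M * V) ≤ 2 ^ (n + c) * V * 2 ^ (n + c) := by
    linear_combination key + V * h4
  exact le_of_mul_le_mul_left hkey (by positivity)

/-- Hamming bound for nondegenerate EA quantum codes (Eq. (23) of the paper), abstracted to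
split weight distributions satisfying the MacWilliams constraints together with the
nondegeneracy condition `B_{i,0} = 0` for `0 < i < d`. -/
theorem ea_nondegenerate_hamming (n c d : ℕ) (hd : 1 ≤ d) (hdn : d ≤ n)
    (M : ℝ) (hM : 0 < M)
    (B Bp : ℕ → ℕ → ℝ)
    (hMacW : ∀ i ≤ n, ∀ j ≤ c, B i j =
      (1 / (2 ^ (n + c) * M)) * ∑ u ∈ Finset.range (n + 1), ∑ v ∈ Finset.range (c + 1),
        Bp u v * kraw n i u * kraw c j v)
    (hB00 : B 0 0 = 1) (hBp00 : Bp 0 0 = 1)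
    (hBnonneg : ∀ i ≤ n, ∀ j ≤ c, 0 ≤ B i j)
    (hBle : ∀ i ≤ n, ∀ j ≤ c, B i j ≤ Bp i j)
    (hnondeg : ∀ i, 1 ≤ i → i ≤ d - 1 → B i 0 = 0 ∧ Bp i 0 = 0)
    (hB0j : ∀ j, 1 ≤ j → j ≤ c → B 0 j = 0) :
    M * ∑ j ∈ Finset.range ((d - 1) / 2 + 1), (3 : ℝ) ^ j * (n.choose j) ≤ 2 ^ (n + c) :=
  ea_nondegenerate_hamming_general n c d M hM B Bp hMacW hB00 hBp00 hBnonneg hnondeg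
end

section
/- For the quaternary Krawtchouk polynomials, the linearization formula holds: for all integers 0 ≤ x ≤ n and 0 ≤ i,j ≤ n, K_i(x;n) · K_j(x;n) = Σ_{l=0}^{n} K_l(x;n) Σ_{r=0}^{n-l} α(l,i,j,r), where α(l,i,j,r) = binom(l, 2l+2r-i-j) · binom(n-l, r) · binom(2l+2r-i-j, l+r-j) · 2^{i+j-2r-l} · 3^r when 0 ≤ 2l+2r-i-j ≤ l and i+j-2r-l ≥ 0, and α(l,i,j,r) = 0 otherwise (binomial coefficients being 0 when their arguments are out of range). -/
open Finset

/-- The linearization coefficient `α(l,i,j,r)`, interpreted as `0` whenever any of the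
implicit integrality/nonnegativity constraints fail. -/
noncomputable def alphaCoef (n l i j r : ℕ) : ℝ :=
  if 2 * r + l ≤ i + j ∧ i + j ≤ 2 * l + 2 * r ∧ j ≤ l + r then
    (l.choose (2 * l + 2 * r - i - j) : ℝ) * ((n - l).choose r) *
      ((2 * l + 2 * r - i - j).choose (l + r - j)) * 2 ^ (i + j - 2 * r - l) * 3 ^ r
  else 0

open Polynomial in
lemma coeff_lin_pow {R : Type*} [CommRing R] (a b : R) (m k : ℕ) :
    ((Polynomial.C a + Polynomial.C b * X) ^ m).coeff k
      = (m.choose k : R) * b ^ k * a ^ (m - k) := by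
  rw [add_comm (Polynomial.C a), add_pow, Polynomial.finset_sum_coeff]
  have hterm : ∀ t ∈ Finset.range (m + 1),
      ((Polynomial.C b * X) ^ t * (Polynomial.C a) ^ (m - t) * (m.choose t : Polynomial R)).coeff k
        = if k = t then (m.choose t : R) * b ^ t * a ^ (m - t) else 0 := by
    intro t ht
    have : (Polynomial.C b * X) ^ t * (Polynomial.C a) ^ (m - t) * (m.choose t : Polynomial R)
        = Polynomial.C ((m.choose t : R) * b ^ t * a ^ (m - t)) * X ^ t := by
      simp only [← Polynomial.C_eq_natCast, Polynomial.C_mul, mul_pow, ← Polynomial.C_pow]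
      ring
    rw [this, Polynomial.coeff_C_mul, Polynomial.coeff_X_pow]
    split <;> simp
  rw [Finset.sum_congr rfl hterm, Finset.sum_ite_eq (Finset.range (m + 1)) k]
  by_cases hk : k ∈ Finset.range (m + 1)
  · rw [if_pos hk]
  · rw [if_neg hk]
    have : m.choose k = 0 := Nat.choose_eq_zero_of_lt (by simpa using hk)
    simp [this]

open Polynomial in
/-- The generating polynomial of the Krawtchouk values. -/
noncomputable def pgen (n x : ℕ) : Polynomial ℝ :=
  (Polynomial.C 1 + Polynomial.C (-1 : ℝ) * X) ^ x
    * (Polynomial.C 1 + Polynomial.C (3 : ℝ) * X) ^ (n - x)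

open Polynomial in
lemma coeff_pgen (n x i : ℕ) : (pgen n x).coeff i = kraw n i x := by
  rw [pgen, Polynomial.coeff_mul, Finset.Nat.sum_antidiagonal_eq_sum_range_succ_mk, kraw]
  refine Finset.sum_congr rfl fun t ht => ?_
  rw [coeff_lin_pow, coeff_lin_pow]
  simp only [one_pow, mul_one]
  ring

lemma sum_triangle {M : Type*} [AddCommMonoid M] (n : ℕ) (F : ℕ → ℕ → M) :
    ∑ l ∈ Finset.range n, ∑ j ∈ Finset.range (l + 1), F j (l - j)
      = ∑ j ∈ Finset.range n, ∑ k ∈ Finset.range (n - j), F j k := by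
  induction n with
  | zero => simp
  | succ n ih =>
    have h2 : ∀ j ∈ Finset.range n, ∑ k ∈ Finset.range (n + 1 - j), F j k
        = (∑ k ∈ Finset.range (n - j), F j k) + F j (n - j) := by
      intro j hj
      have hjn := Finset.mem_range.1 hj
      have : n + 1 - j = (n - j) + 1 := by omega
      rw [this, Finset.sum_range_succ]
    rw [Finset.sum_range_succ, ih]
    conv_rhs => rw [Finset.sum_range_succ]
    rw [Finset.sum_congr rfl h2, Finset.sum_add_distrib, Finset.sum_range_succ, Nat.sub_self]
    simp [add_assoc]

lemma genB {R : Type*} [CommRing R] (u v : R) (n x : ℕ) (hx : x ≤ n) :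
    ∑ l ∈ Finset.range (n + 1),
        (∑ j ∈ Finset.range (l + 1),
          (-1 : R) ^ j * 3 ^ (l - j) * (x.choose j) * ((n - x).choose (l - j)))
          * u ^ l * v ^ (n - l)
      = (v - u) ^ x * (v + 3 * u) ^ (n - x) := by
  set F : ℕ → ℕ → R := fun j k =>
    (-1 : R) ^ j * 3 ^ k * (x.choose j) * ((n - x).choose k) * u ^ (j + k) * v ^ (n - (j + k))
    with hF
  have key : ∀ l ∈ Finset.range (n + 1),
      (∑ j ∈ Finset.range (l + 1),
          (-1 : R) ^ j * 3 ^ (l - j) * (x.choose j) * ((n - x).choose (l - j)))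
          * u ^ l * v ^ (n - l)
        = ∑ j ∈ Finset.range (l + 1), F j (l - j) := by
    intro l hl
    rw [Finset.sum_mul, Finset.sum_mul]
    refine Finset.sum_congr rfl fun t ht => ?_
    have htl : t ≤ l := by simpa [Nat.lt_succ_iff] using ht
    have : t + (l - t) = l := by omega
    rw [hF]; dsimp only; rw [this]
  rw [Finset.sum_congr rfl key, sum_triangle]
  have houter : ∑ j ∈ Finset.range (n + 1), ∑ k ∈ Finset.range (n + 1 - j), F j k
      = ∑ j ∈ Finset.range (x + 1), ∑ k ∈ Finset.range (n - x + 1), F j k := by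
    rw [← Finset.sum_subset (Finset.range_subset_range.2 (by omega : x + 1 ≤ n + 1))]
    · refine Finset.sum_congr rfl fun t ht => ?_
      have htx : t ≤ x := by simpa [Nat.lt_succ_iff] using ht
      rw [← Finset.sum_subset (Finset.range_subset_range.2 (by omega : n - x + 1 ≤ n + 1 - t))]
      intro k hk hk2
      have : n - x < k := by simp at hk2; omega
      have : (n - x).choose k = 0 := Nat.choose_eq_zero_of_lt this
      simp [hF, this]
    · intro t ht ht2
      have : x < t := by simp at ht2; omega
      have hc : x.choose t = 0 := Nat.choose_eq_zero_of_lt this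
      apply Finset.sum_eq_zero
      intro k hk
      simp [hF, hc]
  rw [houter]
  have hfac : ∀ t ∈ Finset.range (x + 1), ∀ k ∈ Finset.range (n - x + 1),
      F t k = ((-1 : R) ^ t * (x.choose t) * u ^ t * v ^ (x - t))
        * ((3 : R) ^ k * ((n - x).choose k) * u ^ k * v ^ (n - x - k)) := by
    intro t ht k hk
    have htx : t ≤ x := by simpa [Nat.lt_succ_iff] using ht
    have hkx : k ≤ n - x := by simpa [Nat.lt_succ_iff] using hk
    have h1 : u ^ (t + k) = u ^ t * u ^ k := pow_add u t k
    have h2 : n - (t + k) = (x - t) + (n - x - k) := by omega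
    rw [hF]; dsimp only
    rw [h1, h2, pow_add]
    ring
  calc ∑ j ∈ Finset.range (x + 1), ∑ k ∈ Finset.range (n - x + 1), F j k
      = ∑ j ∈ Finset.range (x + 1), ∑ k ∈ Finset.range (n - x + 1),
          ((-1 : R) ^ j * (x.choose j) * u ^ j * v ^ (x - j))
        * ((3 : R) ^ k * ((n - x).choose k) * u ^ k * v ^ (n - x - k)) := by
        refine Finset.sum_congr rfl fun t ht => Finset.sum_congr rfl fun k hk => hfac t ht k hk
    _ = (∑ j ∈ Finset.range (x + 1), (-1 : R) ^ j * (x.choose j) * u ^ j * v ^ (x - j))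
        * (∑ k ∈ Finset.range (n - x + 1),
            (3 : R) ^ k * ((n - x).choose k) * u ^ k * v ^ (n - x - k)) := by
        rw [Finset.sum_mul_sum]
    _ = (v - u) ^ x * (v + 3 * u) ^ (n - x) := by
        have e1 : v - u = (-u) + v := by ring
        have e2 : v + 3 * u = (3 * u) + v := by ring
        rw [e1, e2, add_pow, add_pow]
        congr 1
        · refine Finset.sum_congr rfl fun t ht => ?_
          rw [neg_pow]
          ring
        · refine Finset.sum_congr rfl fun k hk => ?_
          rw [mul_pow]
          ring

noncomputable abbrev SS : Type := Polynomial (Polynomial ℝ)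

open Polynomial in
/-- the monomial `c * z^a * w^b` in `SS` -/
noncomputable def mono (a b : ℕ) (c : ℝ) : SS :=
  Polynomial.C (Polynomial.C c * X ^ b) * X ^ a

open Polynomial in
lemma cf_mono (a b i j : ℕ) (c : ℝ) :
    (((mono a b c).coeff i).coeff j) = if i = a ∧ j = b then c else 0 := by
  rw [mono, Polynomial.coeff_C_mul, Polynomial.coeff_X_pow]
  by_cases h : i = a
  · rw [if_pos h, mul_one, Polynomial.coeff_C_mul, Polynomial.coeff_X_pow]
    by_cases h2 : j = b
    · rw [if_pos h2, if_pos ⟨h, h2⟩, mul_one]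
    · rw [if_neg h2, if_neg (by tauto), mul_zero]
  · rw [if_neg h, mul_zero, Polynomial.coeff_zero, if_neg (by tauto)]

open Polynomial in
lemma expand_prod (n l : ℕ) :
    ((X + Polynomial.C X + 2 * X * Polynomial.C X : SS)) ^ l
        * (1 + 3 * (X * Polynomial.C X)) ^ (n - l)
      = ∑ r ∈ Finset.range (n - l + 1), ∑ s ∈ Finset.range (l + 1), ∑ t ∈ Finset.range (s + 1),
          mono (l - s + t + r) (s + r)
            (2 ^ t * 3 ^ r * (l.choose s) * (s.choose t) * ((n - l).choose r)) := by
  have h1 : (X + Polynomial.C X + 2 * X * Polynomial.C X : SS)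
      = Polynomial.C X * (1 + 2 * X) + X := by ring
  have h2 : ((1 : SS) + 3 * (X * Polynomial.C X)) ^ (n - l)
      = ∑ r ∈ Finset.range (n - l + 1),
          (3 * (X * Polynomial.C X)) ^ r * (((n - l).choose r : ℕ) : SS) := by
    rw [add_comm, add_pow]; simp
  rw [h1, add_pow, h2, Finset.sum_mul_sum, Finset.sum_comm]
  refine Finset.sum_congr rfl fun r hr => Finset.sum_congr rfl fun s hs => ?_
  have h3 : ((1 : SS) + 2 * X) ^ s
      = ∑ t ∈ Finset.range (s + 1), (2 * X : SS) ^ t * ((s.choose t : ℕ) : SS) := by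
    rw [add_comm, add_pow]; simp
  rw [mul_pow, h3]
  simp only [Finset.mul_sum, Finset.sum_mul]
  refine Finset.sum_congr rfl fun t ht => ?_
  simp only [mono, map_mul, map_pow, map_ofNat, map_natCast, pow_add]
  ring

lemma collapse (n l i j r : ℕ) :
    (∑ s ∈ Finset.range (l + 1), ∑ t ∈ Finset.range (s + 1),
      (if i = l - s + t + r ∧ j = s + r then
        ((2 : ℝ) ^ t * 3 ^ r * (l.choose s) * (s.choose t) * ((n - l).choose r)) else 0))
      = alphaCoef n l i j r := by
  by_cases hP : r ≤ j ∧ j ≤ l + r ∧ l + 2 * r ≤ i + j ∧ i ≤ l + r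
  · obtain ⟨hP1, hP2, hP3, hP4⟩ := hP
    rw [Finset.sum_eq_single (j - r)]
    · rw [Finset.sum_eq_single (i + j - l - 2 * r)]
      · rw [if_pos ⟨by omega, by omega⟩]
        rw [alphaCoef, if_pos ⟨by omega, by omega, by omega⟩]
        have hc1 : l.choose (j - r) * (j - r).choose (i + j - l - 2 * r)
            = l.choose (i + j - l - 2 * r)
              * (l - (i + j - l - 2 * r)).choose (j - r - (i + j - l - 2 * r)) :=
          Nat.choose_mul (by omega)
        have e1 : l - (i + j - l - 2 * r) = 2 * l + 2 * r - i - j := by omega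
        have e2 : j - r - (i + j - l - 2 * r) = l + r - i := by omega
        rw [e1, e2] at hc1
        have hc2 : l.choose (i + j - l - 2 * r) = l.choose (2 * l + 2 * r - i - j) := by
          rw [← Nat.choose_symm (show 2 * l + 2 * r - i - j ≤ l by omega)]
          congr 1; omega
        have hc3 : (2 * l + 2 * r - i - j).choose (l + r - i)
            = (2 * l + 2 * r - i - j).choose (l + r - j) := by
          rw [← Nat.choose_symm (show l + r - j ≤ 2 * l + 2 * r - i - j by omega)]
          congr 1; omega
        rw [hc2, hc3] at hc1
        have e3 : i + j - l - 2 * r = i + j - 2 * r - l := by omega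
        rw [e3] at hc1 ⊢
        have := congrArg (fun m : ℕ => (m : ℝ)) hc1
        push_cast at this
        linear_combination ((2:ℝ) ^ (i + j - 2 * r - l) * 3 ^ r * ((n - l).choose r : ℝ)) * this
      · intro t ht hne
        rw [if_neg]
        rintro ⟨h1, h2⟩
        exact hne (by omega)
      · intro h
        exfalso; exact h (Finset.mem_range.2 (by omega))
    · intro s hs hne
      apply Finset.sum_eq_zero
      intro t ht
      rw [if_neg]
      rintro ⟨h1, h2⟩
      exact hne (by omega)
    · intro h
      exfalso; exact h (Finset.mem_range.2 (by omega))
  · rw [alphaCoef]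
    have hz : (∑ s ∈ Finset.range (l + 1), ∑ t ∈ Finset.range (s + 1),
        (if i = l - s + t + r ∧ j = s + r then
          ((2 : ℝ) ^ t * 3 ^ r * (l.choose s) * (s.choose t) * ((n - l).choose r)) else 0)) = 0 := by
      apply Finset.sum_eq_zero; intro s hs
      apply Finset.sum_eq_zero; intro t ht
      have hs' := Finset.mem_range.1 hs
      have ht' := Finset.mem_range.1 ht
      rw [if_neg]
      rintro ⟨h1, h2⟩
      exact hP ⟨by omega, by omega, by omega, by omega⟩
    rw [hz]
    split
    · next hcond =>
      obtain ⟨hc1, hc2, hc3⟩ := hcond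
      have hi : l + r < i := by
        by_contra hieq
        push_neg at hieq
        exact hP ⟨by omega, by omega, by omega, by omega⟩
      have : (2 * l + 2 * r - i - j).choose (l + r - j) = 0 :=
        Nat.choose_eq_zero_of_lt (by omega)
      simp [this]
    · rfl

open Polynomial in
lemma cf_core (n l i j : ℕ) :
    ((((X + Polynomial.C X + 2 * X * Polynomial.C X : SS)) ^ l
        * (1 + 3 * (X * Polynomial.C X)) ^ (n - l)).coeff i).coeff j
      = ∑ r ∈ Finset.range (n - l + 1), alphaCoef n l i j r := by
  rw [expand_prod n l]
  simp only [Polynomial.finset_sum_coeff, cf_mono]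
  exact Finset.sum_congr rfl fun r hr => collapse n l i j r

open Polynomial in
theorem kraw_linearization (n x i j : ℕ) (hx : x ≤ n) (hi : i ≤ n) (hj : j ≤ n) :
    kraw n i x * kraw n j x =
      ∑ l ∈ Finset.range (n + 1), kraw n l x *
        ∑ r ∈ Finset.range (n - l + 1), alphaCoef n l i j r := by
  set u : SS := X + Polynomial.C X + 2 * X * Polynomial.C X with hu
  set v : SS := 1 + 3 * (X * Polynomial.C X) with hv
  have hco : ∀ l : ℕ, (Polynomial.C (Polynomial.C (kraw n l x)) : SS)
      = ∑ t ∈ Finset.range (l + 1),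
          (-1 : SS) ^ t * 3 ^ (l - t) * (x.choose t) * ((n - x).choose (l - t)) := by
    intro l
    rw [kraw, map_sum, map_sum]
    refine Finset.sum_congr rfl fun t ht => ?_
    simp only [map_mul, map_pow, map_neg, map_one, map_natCast, map_ofNat]
  have hmain : ∑ l ∈ Finset.range (n + 1),
      (Polynomial.C (Polynomial.C (kraw n l x)) : SS) * u ^ l * v ^ (n - l)
        = (v - u) ^ x * (v + 3 * u) ^ (n - x) := by
    rw [Finset.sum_congr rfl fun l _ => by rw [hco l]]
    exact genB u v n x hx
  have hsplit : ((v - u) ^ x * (v + 3 * u) ^ (n - x) : SS)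
      = (pgen n x).map Polynomial.C * Polynomial.C (pgen n x) := by
    have e1 : v - u = ((1 : SS) - X) * (1 - Polynomial.C X) := by rw [hu, hv]; ring
    have e2 : v + 3 * u = ((1 : SS) + 3 * X) * (1 + 3 * Polynomial.C X) := by
      rw [hu, hv]; ring
    rw [e1, e2, mul_pow, mul_pow]
    rw [pgen, Polynomial.map_mul, Polynomial.map_pow, Polynomial.map_pow, map_mul, map_pow,
      map_pow]
    simp only [Polynomial.map_add, Polynomial.map_mul, Polynomial.map_C, Polynomial.map_X,
      Polynomial.map_one, Polynomial.map_neg, Polynomial.map_ofNat,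
      map_add, map_mul, map_one, map_neg, map_ofNat]
    ring
  have hfinal := congrArg (fun q : SS => (q.coeff i).coeff j) (hmain.trans hsplit)
  -- compute RHS of hfinal
  have hrhs : ((((pgen n x).map Polynomial.C * Polynomial.C (pgen n x)).coeff i).coeff j)
      = kraw n i x * kraw n j x := by
    rw [Polynomial.coeff_mul_C, Polynomial.coeff_map, Polynomial.coeff_C_mul, coeff_pgen,
      coeff_pgen]
  -- compute LHS of hfinal
  have hlhs : (((∑ l ∈ Finset.range (n + 1),
      (Polynomial.C (Polynomial.C (kraw n l x)) : SS) * u ^ l * v ^ (n - l)).coeff i).coeff j)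
      = ∑ l ∈ Finset.range (n + 1), kraw n l x *
          ∑ r ∈ Finset.range (n - l + 1), alphaCoef n l i j r := by
    simp only [Polynomial.finset_sum_coeff]
    refine Finset.sum_congr rfl fun l hl => ?_
    rw [mul_assoc, Polynomial.coeff_C_mul, Polynomial.coeff_C_mul, cf_core n l i j]
  rw [hlhs, hrhs] at hfinal
  exact hfinal.symm
end
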